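/- arXiv:1012.2558 — 3 statements merged into one kernel-verified Lean document; each statement's English description precedes it below -/
import Mathlib

section
/- Let p be an odd prime, τ₀ = i/√p, and τ₁ = (τ₀ - 1)/2. Then ω_p τ₁ = A τ₁ for the matrix A = [[2,1],[p,(p+1)/2]], and A ∈ Γ₀(p) (note det A = 2·(p+1)/2 - p = 1). -/
/-- For an odd prime `p`, `τ₁ = (τ₀ - 1)/2` with `τ₀ = i/√p`
satisfies `ω_p τ₁ = A τ₁` for `A = [[2,1],[p,(p+1)/2]]`, and `A ∈ Γ₀(p)`
(it is an integer matrix of determinant `1` with lower-left entry divisible by `p`). -/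
theorem stmt2 (p : ℕ) (hp : p.Prime) (hodd : Odd p)
    (τ₀ τ₁ : ℂ) (h0 : τ₀ = Complex.I / Real.sqrt p) (h1 : τ₁ = (τ₀ - 1) / 2) :
    -1 / ((p : ℂ) * τ₁) =
        (2 * τ₁ + 1) / ((p : ℂ) * τ₁ + ((((p : ℤ) + 1) / 2 : ℤ) : ℂ)) ∧
      2 * (((p : ℤ) + 1) / 2) - 1 * (p : ℤ) = 1 ∧ (p : ℤ) ∣ (p : ℤ) := by
  obtain ⟨k, hk⟩ := hodd
  have hp0 : 0 < p := hp.pos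
  have hs : (0:ℝ) < Real.sqrt p := Real.sqrt_pos.2 (by positivity)
  set s : ℝ := Real.sqrt p with hsdef
  have hs2 : (s:ℂ)^2 = (p:ℂ) := by
    have : s^2 = (p:ℝ) := Real.sq_sqrt (by positivity)
    exact_mod_cast congrArg (Complex.ofReal) this
  have hsne : (s:ℂ) ≠ 0 := by exact_mod_cast hs.ne'
  have hc : ((((p:ℤ)+1)/2 : ℤ) : ℂ) = (k:ℂ) + 1 := by
    have h : ((p:ℤ)+1)/2 = (k:ℤ)+1 := by omega
    rw [h]; push_cast; ring
  have hpk : (p:ℂ) = 2*(k:ℂ)+1 := by exact_mod_cast congrArg (Nat.cast : ℕ → ℂ) hk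
  refine ⟨?_, by omega, dvd_refl _⟩
  subst h1 h0
  have him : ((p:ℂ) * ((Complex.I / s - 1)/2)).im = p / (2*s) := by
    simp [Complex.div_im, Complex.mul_im]
    field_simp
  have hne1 : (p:ℂ) * ((Complex.I / (s:ℂ) - 1)/2) ≠ 0 := by
    intro h
    have := congrArg Complex.im h
    rw [him] at this
    simp at this
    rcases this with h' | h' <;> [exact hp0.ne' (by exact_mod_cast h'); exact hs.ne' h']
  have hne2 : (p:ℂ) * ((Complex.I / (s:ℂ) - 1)/2) + ((((p:ℤ)+1)/2 : ℤ) : ℂ) ≠ 0 := by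
    intro h
    have := congrArg Complex.im h
    simp [Complex.add_im, him] at this
    rcases this with h' | h' <;> [exact hp0.ne' (by exact_mod_cast h'); exact hs.ne' h']
  have hq : (p:ℂ) * (s:ℂ)⁻¹ * (s:ℂ)⁻¹ = 1 := by
    rw [← hs2]; field_simp
  rw [div_eq_div_iff hne1 hne2, hc]
  linear_combination (-(Complex.I^2)/2) * hq + (-1/2 : ℂ) * Complex.I_sq + (1/2 : ℂ) * hpk
end

section
/- Let p be an odd prime with p ≡ 3 mod 4, and let τ ∈ H be a root of a·p·X² + 2·b·p·X + d = 0 with a, b, d integers, a > 0, such that the matrix A = [[a,b],[bp,d]] has determinant 1, i.e. ad − pb² = 1. If gcd(ap, 2bp, d) = ℓ > 1, then ℓ = 2 and the discriminant of the primitive quadratic form obtained by dividing by 2 equals −p. -/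
/-- Let `p ≡ 3 mod 4` be prime, `a,b,d ∈ ℤ`, `a > 0`,
`ad − pb² = 1`, and let `τ` in the upper half-plane be a root of
`apX² + 2bpX + d`. If `ℓ = gcd(ap, 2bp, d) > 1` then `ℓ = 2` and the
primitive quadratic form obtained by dividing the coefficients by `ℓ`
has discriminant `−p`. -/
theorem stmt4 (p : ℕ) (hp : p.Prime) (h34 : p % 4 = 3)
    (a b d : ℤ) (ha : 0 < a) (hdet : a * d - (p : ℤ) * b ^ 2 = 1)
    (τ : ℂ) (hτ : 0 < τ.im)
    (hroot : (a : ℂ) * p * τ ^ 2 + 2 * b * p * τ + d = 0)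
    (ℓ : ℕ) (hℓ : (ℓ : ℤ) = Int.gcd (Int.gcd (a * p) (2 * b * p)) d)
    (h1 : 1 < ℓ) :
    ℓ = 2 ∧
      (2 * b * (p : ℤ) / ℓ) ^ 2 - 4 * (a * (p : ℤ) / ℓ) * (d / ℓ) = -(p : ℤ) := by
  have hAP : (ℓ : ℤ) ∣ a * p := by
    rw [hℓ]; exact (Int.gcd_dvd_left _ _).trans (Int.gcd_dvd_left _ _)
  have hBP : (ℓ : ℤ) ∣ 2 * b * p := by
    rw [hℓ]; exact (Int.gcd_dvd_left _ _).trans (Int.gcd_dvd_right _ _)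
  have hD : (ℓ : ℤ) ∣ d := by
    rw [hℓ]; exact Int.gcd_dvd_right _ _
  -- ℓ is coprime to p
  have hpnd : ¬ ((p : ℤ) ∣ (ℓ : ℤ)) := by
    intro hpd
    have hp1 : (p : ℤ) ∣ d := hpd.trans hD
    have : (p : ℤ) ∣ 1 := by
      have : (p : ℤ) ∣ a * d - (p : ℤ) * b ^ 2 :=
        dvd_sub (Dvd.dvd.mul_left hp1 a) (Dvd.dvd.mul_right (dvd_refl _) _)
      rwa [hdet] at this
    have := Int.le_of_dvd one_pos this
    have hp2 : 2 ≤ (p : ℤ) := by exact_mod_cast hp.two_le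
    omega
  have hcop : IsCoprime ((ℓ : ℤ)) (p : ℤ) :=
    ((Nat.prime_iff_prime_int.1 hp).coprime_iff_not_dvd.mpr hpnd).symm
  -- ℓ² ∣ 4p
  have key : (4 : ℤ) * p = 4 * ((a * p) * d) - (2 * b * p) ^ 2 := by
    linear_combination -4 * (p : ℤ) * hdet
  have hsq : ((ℓ : ℤ)) ^ 2 ∣ 4 * p := by
    rw [key]
    exact dvd_sub (Dvd.dvd.mul_left (by rw [sq]; exact mul_dvd_mul hAP hD) 4)
      (by rw [sq, sq]; exact mul_dvd_mul hBP hBP)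
  have h4 : ((ℓ : ℤ)) ^ 2 ∣ 4 := (hcop.pow_left).dvd_of_dvd_mul_right hsq
  have h4' : ℓ ^ 2 ∣ 4 := by exact_mod_cast h4
  have hle : ℓ ^ 2 ≤ 4 := Nat.le_of_dvd (by norm_num) h4'
  have hℓ2 : ℓ = 2 := by nlinarith
  subst hℓ2
  refine ⟨rfl, ?_⟩
  obtain ⟨k, hk⟩ := hAP
  obtain ⟨m, hm⟩ := hD
  have e1 : 2 * b * (p : ℤ) / ((2 : ℕ) : ℤ) = b * p := by
    push_cast; rw [mul_assoc, Int.mul_ediv_cancel_left _ two_ne_zero]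
  have e2 : a * (p : ℤ) / ((2 : ℕ) : ℤ) = k := by
    push_cast; rw [hk]; push_cast; exact Int.mul_ediv_cancel_left _ two_ne_zero
  have e3 : d / ((2 : ℕ) : ℤ) = m := by
    push_cast; rw [hm]; push_cast; exact Int.mul_ediv_cancel_left _ two_ne_zero
  rw [e1, e2, e3]
  have h4km : (a * p) * d = 4 * (k * m) := by rw [hk, hm]; push_cast; ring
  linear_combination h4km - (p : ℤ) * hdet
end

section
/- Fix a prime p, integers k > 0 and 0 < l < p, and let a₀ = n mod p for a positive integer n with a₀ ≠ 0. With H(n) = F_p^k(σ_p^l(n)) − σ_p^l(F_p^k(n)): if a₀ + l ≥ p then H(n) < 0, and if a₀ + l < p then H(n) = l·(p^k − 1) > 0. -/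
/-- `F_p(n) = p·n`. -/
def Fp (p n : ℕ) : ℕ := p * n

/-- `σ_p` cyclically increments the last base-`p` digit of `n`. -/
def sigmap (p n : ℕ) : ℕ := n - n % p + ((n % p) + 1) % p

lemma Fp_iter (p k n : ℕ) : (Fp p)^[k] n = p ^ k * n := by
  induction k with
  | zero => simp
  | succ k ih => rw [Function.iterate_succ_apply', ih, Fp, pow_succ]; ring

lemma sigmap_iter (p : ℕ) (hp : 0 < p) (n l : ℕ) :
    (sigmap p)^[l] n = n - n % p + (n % p + l) % p := by
  induction l with
  | zero => simp [Nat.mod_eq_of_lt (Nat.mod_lt n hp), Nat.sub_add_cancel (Nat.mod_le n p)]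
  | succ l ih =>
      rw [Function.iterate_succ_apply', ih, sigmap]
      have hdiv : n - n % p = p * (n / p) := by
        have := Nat.mod_add_div n p; omega
      have hm : (n - n % p + (n % p + l) % p) % p = (n % p + l) % p := by
        rw [hdiv, Nat.mul_add_mod]
        exact Nat.mod_mod_of_dvd _ dvd_rfl
      rw [hm]
      have : n - n % p + (n % p + l) % p - (n % p + l) % p = n - n % p := by omega
      rw [this, Nat.mod_add_mod]
      ring_nf

/-- For a prime `p`, `k > 0`, `0 < l < p`, and a positive integer
`n` with `a₀ = n mod p ≠ 0`, the integer
`H(n) = F_p^k(σ_p^l(n)) − σ_p^l(F_p^k(n))` is negative when `a₀ + l ≥ p`,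
and equals `l·(p^k − 1) > 0` when `a₀ + l < p`. -/
theorem stmt9 (p : ℕ) (hp : p.Prime) (k l : ℕ) (hk : 0 < k)
    (hl : 0 < l) (hlp : l < p) (n : ℕ) (hn : 0 < n) (ha : n % p ≠ 0) :
    (p ≤ n % p + l →
        ((Fp p)^[k] ((sigmap p)^[l] n) : ℤ) -
            ((sigmap p)^[l] ((Fp p)^[k] n) : ℤ) < 0) ∧
      (n % p + l < p →
        ((Fp p)^[k] ((sigmap p)^[l] n) : ℤ) -
            ((sigmap p)^[l] ((Fp p)^[k] n) : ℤ) =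
          (l : ℤ) * ((p : ℤ) ^ k - 1) ∧
          0 < (l : ℤ) * ((p : ℤ) ^ k - 1)) := by
  have hp0 : 0 < p := hp.pos
  have hp1 : 1 < p := hp.one_lt
  set a := n % p with haa
  have halt : a < p := Nat.mod_lt n hp0
  have hale : a ≤ n := Nat.mod_le n p
  -- closed forms
  have h1 : (Fp p)^[k] ((sigmap p)^[l] n) = p ^ k * (n - a + (a + l) % p) := by
    rw [sigmap_iter p hp0, Fp_iter]
  have hFkmod : ((Fp p)^[k] n) % p = 0 := by
    rw [Fp_iter]
    have hd : p ∣ p ^ k * n := Dvd.dvd.mul_right (dvd_pow_self p hk.ne') n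
    rw [Nat.mul_mod, Nat.pow_mod, Nat.mod_self, Nat.zero_pow hk, Nat.zero_mod, Nat.zero_mul, Nat.zero_mod]
  have h2 : (sigmap p)^[l] ((Fp p)^[k] n) = p ^ k * n + l := by
    rw [sigmap_iter p hp0, hFkmod, Fp_iter, Nat.zero_add, Nat.mod_eq_of_lt hlp]
    omega
  have hpk1 : 1 < p ^ k := Nat.one_lt_pow (by omega) hp1
  have hpkZ : (1 : ℤ) < (p : ℤ) ^ k := by exact_mod_cast hpk1
  constructor
  · intro hge
    have hmod : (a + l) % p = a + l - p := by
      rw [Nat.mod_eq_sub_mod hge, Nat.mod_eq_of_lt (by omega)]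
    have hsub : n - a + (a + l - p) = n - (p - l) := by omega
    rw [h1, h2, hmod, hsub]
    have h5 : ((p ^ k * (n - (p - l)) : ℕ) : ℤ) = (p:ℤ)^k * ((n:ℤ) - ((p:ℤ) - (l:ℤ))) := by
      rw [Nat.cast_mul, Nat.cast_sub (show p - l ≤ n by omega), Nat.cast_sub hlp.le]
      push_cast; ring
    rw [h5]
    push_cast
    have hc : (l:ℤ) < (p:ℤ) := by exact_mod_cast hlp
    have hl0 : (0:ℤ) < (l:ℤ) := by exact_mod_cast hl
    nlinarith [hpkZ]
  · intro hlt
    have hmod : (a + l) % p = a + l := Nat.mod_eq_of_lt hlt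
    rw [h1, h2, hmod]
    constructor
    · push_cast [hale]
      ring
    · have : (0:ℤ) < l := by exact_mod_cast hl
      have : (0:ℤ) < (p:ℤ)^k - 1 := by omega
      positivity
end
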